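/- Let K be a field of characteristic zero in which every element is algebraic over ℚ. Then K̃ equals the set of elements of K that are fixed by every field automorphism of K; that is, K̃ = ⋂_{σ ∈ Aut(K)} {x ∈ K : σ(x) = x}. -/

import Mathlib

/-!
Ring endomorphisms are arithmetic maps, so arithmetically fixed elements are fixed by every
automorphism. Conversely, the arithmetically fixed elements form a subfield, hence contain `ℚ`,
and so an arithmetic map on a suitable finite set is forced to send `x` to a root of the minimal
polynomial of `x`. If `r` is not arithmetically fixed, then for every finite `B ⊆ K` some
arithmetic map on a finite set containing `B` and these auxiliary sets moves `r`. Each `x` has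
only finitely many possible images, so an ultrafilter limit of these maps is a ring endomorphism
of `K` moving `r`; as `K` is algebraic over `ℚ`, it is an automorphism.
-/

open Polynomial Filter

/-- A map `f` is *arithmetic* on a subset `A` of a field `K`. -/
def ArithmeticMap {K : Type*} [Field K] (A : Set K) (f : K → K) : Prop :=
  ((1 : K) ∈ A → f 1 = 1) ∧
  (∀ a b : K, a ∈ A → b ∈ A → a + b ∈ A → f (a + b) = f a + f b) ∧
  (∀ a b : K, a ∈ A → b ∈ A → a * b ∈ A → f (a * b) = f a * f b)

/-- An element `r` of a field `K` is *arithmetically fixed* if there is a finite set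
`A ⊆ K` with `r ∈ A` such that every arithmetic map `f : A → K` fixes `r`. -/
def ArithFixed {K : Type*} [Field K] (r : K) : Prop :=
  ∃ A : Finset K, r ∈ A ∧ ∀ f : K → K, ArithmeticMap (↑A : Set K) f → f r = r

section

variable {K : Type*} [Field K]

namespace ArithmeticMap

variable {A B : Set K} {f : K → K}

theorem mono (hf : ArithmeticMap B f) (hAB : A ⊆ B) : ArithmeticMap A f :=
  ⟨fun h => hf.1 (hAB h), fun a b ha hb hab => hf.2.1 a b (hAB ha) (hAB hb) (hAB hab),
    fun a b ha hb hab => hf.2.2 a b (hAB ha) (hAB hb) (hAB hab)⟩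

theorem map_zero (hf : ArithmeticMap A f) (h0 : (0 : K) ∈ A) : f 0 = 0 := by
  have h := hf.2.1 0 0 h0 h0 (by rwa [add_zero])
  rwa [add_zero, left_eq_add] at h

end ArithmeticMap

theorem RingHom.arithmeticMap (σ : K →+* K) (A : Set K) : ArithmeticMap A σ :=
  ⟨fun _ => map_one σ, fun a b _ _ _ => map_add σ a b, fun a b _ _ _ => map_mul σ a b⟩

theorem ArithFixed.map_eq {r : K} (hr : ArithFixed r) (σ : K →+* K) : σ r = r :=
  let ⟨A, _, hA⟩ := hr
  hA σ (σ.arithmeticMap A)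

def ArithDetermined (a x : K) (φ : K → K) : Prop :=
  ∃ A : Finset K, x ∈ A ∧ ∀ f : K → K, ArithmeticMap (↑A : Set K) f → f x = φ (f a)

namespace ArithDetermined

variable {a x y : K} {φ ψ : K → K}

theorem self (a : K) : ArithDetermined a a id :=
  ⟨{a}, Finset.mem_singleton_self a, fun _ _ => rfl⟩

theorem add (hx : ArithDetermined a x φ) (hy : ArithDetermined a y ψ) :
    ArithDetermined a (x + y) (fun t => φ t + ψ t) := by
  classical
  obtain ⟨A, hxA, hA⟩ := hx
  obtain ⟨B, hyB, hB⟩ := hy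
  refine ⟨A ∪ B ∪ {x + y}, by simp, fun f hf => ?_⟩
  rw [hf.2.1 x y (by simp [hxA]) (by simp [hyB]) (by simp),
    hA f (hf.mono (by intro; simp_all)), hB f (hf.mono (by intro; simp_all))]

theorem mul (hx : ArithDetermined a x φ) (hy : ArithDetermined a y ψ) :
    ArithDetermined a (x * y) (fun t => φ t * ψ t) := by
  classical
  obtain ⟨A, hxA, hA⟩ := hx
  obtain ⟨B, hyB, hB⟩ := hy
  refine ⟨A ∪ B ∪ {x * y}, by simp, fun f hf => ?_⟩
  rw [hf.2.2 x y (by simp [hxA]) (by simp [hyB]) (by simp),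
    hA f (hf.mono (by intro; simp_all)), hB f (hf.mono (by intro; simp_all))]

end ArithDetermined

theorem arithDetermined_const_iff {a c : K} : ArithDetermined a c (fun _ => c) ↔ ArithFixed c :=
  Iff.rfl

namespace ArithFixed

variable {x y : K}

theorem add (hx : ArithFixed x) (hy : ArithFixed y) : ArithFixed (x + y) :=
  arithDetermined_const_iff.1 <|
    (arithDetermined_const_iff (a := (0 : K))).2 hx |>.add (arithDetermined_const_iff.2 hy)

theorem mul (hx : ArithFixed x) (hy : ArithFixed y) : ArithFixed (x * y) :=
  arithDetermined_const_iff.1 <|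
    (arithDetermined_const_iff (a := (0 : K))).2 hx |>.mul (arithDetermined_const_iff.2 hy)

theorem neg (hx : ArithFixed x) : ArithFixed (-x) := by
  classical
  obtain ⟨A, hxA, hA⟩ := hx
  refine ⟨A ∪ {0, -x}, by simp, fun f hf => ?_⟩
  have h := hf.2.1 x (-x) (by simp [hxA]) (by simp) (by simp)
  rw [add_neg_cancel, hf.map_zero (by simp), hA f (hf.mono (by intro; simp_all))] at h
  linear_combination -h

theorem inv (hx : ArithFixed x) : ArithFixed x⁻¹ := by
  classical
  obtain rfl | hx0 := eq_or_ne x 0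
  · rwa [inv_zero]
  obtain ⟨A, hxA, hA⟩ := hx
  refine ⟨A ∪ {1, x⁻¹}, by simp, fun f hf => ?_⟩
  have h := hf.2.2 x x⁻¹ (by simp [hxA]) (by simp) (by simp [mul_inv_cancel₀ hx0])
  rw [mul_inv_cancel₀ hx0, hf.1 (by simp), hA f (hf.mono (by intro; simp_all))] at h
  exact eq_inv_of_mul_eq_one_right h.symm

end ArithFixed

theorem arithFixed_zero : ArithFixed (0 : K) :=
  ⟨{0}, Finset.mem_singleton_self 0, fun _ hf => hf.map_zero (Finset.mem_singleton_self 0)⟩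

theorem arithFixed_one : ArithFixed (1 : K) :=
  ⟨{1}, Finset.mem_singleton_self 1, fun _ hf => hf.1 (Finset.mem_singleton_self 1)⟩

variable (K) in
def arithFixedSubfield : Subfield K where
  carrier := {r | ArithFixed r}
  zero_mem' := arithFixed_zero
  one_mem' := arithFixed_one
  add_mem' := ArithFixed.add
  mul_mem' := ArithFixed.mul
  neg_mem' := ArithFixed.neg
  inv_mem' _ := ArithFixed.inv

theorem arithFixed_ratCast [CharZero K] (q : ℚ) : ArithFixed (q : K) :=
  SubfieldClass.ratCast_mem (arithFixedSubfield K) q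

theorem arithDetermined_aeval [CharZero K] (a : K) (P : ℚ[X]) :
    ArithDetermined a (aeval a P) (fun t => aeval t P) := by
  induction P using Polynomial.induction_on with
  | C q => simpa only [aeval_C, eq_ratCast] using arithDetermined_const_iff.2 (arithFixed_ratCast q)
  | add P Q hP hQ => simpa only [map_add] using hP.add hQ
  | monomial n q h =>
    simpa only [pow_succ, ← mul_assoc, map_mul, aeval_X, id] using h.mul (.self a)

theorem exists_finset_forall_arithmeticMap_aeval_eq_zero [CharZero K] {a : K} {P : ℚ[X]}
    (hP : aeval a P = 0) :
    ∃ A : Finset K, ∀ f : K → K, ArithmeticMap (↑A : Set K) f → aeval (f a) P = 0 := by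
  obtain ⟨A, hA, hf⟩ := arithDetermined_aeval a P
  rw [hP] at hA hf
  exact ⟨A, fun f hf' => (hf f hf').symm.trans (hf'.map_zero hA)⟩

end

theorem Ultrafilter.exists_ringHom_eventually_eq {ι R S : Type*} [NonAssocSemiring R]
    [NonAssocRing S] (l : Ultrafilter ι) (F : ι → R → S)
    (hfin : ∀ x, ∃ s : Set S, s.Finite ∧ ∀ᶠ i in l, F i x ∈ s)
    (hone : ∀ᶠ i in l, F i 1 = 1)
    (hadd : ∀ x y, ∀ᶠ i in l, F i (x + y) = F i x + F i y)
    (hmul : ∀ x y, ∀ᶠ i in l, F i (x * y) = F i x * F i y) :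
    ∃ g : R →+* S, ∀ x, ∀ᶠ i in l, F i x = g x := by
  have hlim : ∀ x, ∃ v, ∀ᶠ i in l, F i x = v := fun x => by
    obtain ⟨s, hs, hx⟩ := hfin x
    obtain ⟨v, -, hv⟩ := (eventually_exists_mem_iff (P := fun v i => F i x = v) hs).1
      (hx.mono fun i hi => ⟨F i x, hi, rfl⟩)
    exact ⟨v, hv⟩
  choose g hg using hlim
  have hg_one : g 1 = 1 := by
    obtain ⟨i, h1, h⟩ := ((hg 1).and hone).exists
    rw [← h1, h]
  have hg_add (x y : R) : g (x + y) = g x + g y := by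
    obtain ⟨i, hxy, hx, hy, h⟩ := ((hg (x + y)).and ((hg x).and ((hg y).and (hadd x y)))).exists
    rw [← hxy, ← hx, ← hy, h]
  have hg_mul (x y : R) : g (x * y) = g x * g y := by
    obtain ⟨i, hxy, hx, hy, h⟩ := ((hg (x * y)).and ((hg x).and ((hg y).and (hmul x y)))).exists
    rw [← hxy, ← hx, ← hy, h]
  exact ⟨RingHom.mk' ⟨⟨g, hg_one⟩, hg_mul⟩ hg_add, hg⟩

theorem exists_ringHom_apply_ne_of_not_arithFixed {K : Type*} [Field K] [CharZero K]
    (halg : ∀ x : K, IsAlgebraic ℚ x) {r : K} (hr : ¬ArithFixed r) :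
    ∃ g : K →+* K, g r ≠ r := by
  classical
  choose R hR using fun x : K =>
    exists_finset_forall_arithmeticMap_aeval_eq_zero (minpoly.aeval ℚ x)
  have hmove (B : Finset K) :
      ∃ f : K → K, ArithmeticMap ↑(insert r (B ∪ B.biUnion R)) f ∧ f r ≠ r := by
    by_contra! h
    exact hr ⟨_, Finset.mem_insert_self _ _, h⟩
  choose F hF hFr using hmove
  have hFB (B : Finset K) : ArithmeticMap ↑B (F B) := (hF B).mono (by intro; simp_all)
  have hroot (B : Finset K) (x : K) (hx : x ∈ B) : aeval (F B x) (minpoly ℚ x) = 0 :=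
    hR x (F B) ((hF B).mono fun y hy => by simpa using Or.inr (Or.inr ⟨x, hx, hy⟩))
  let l : Ultrafilter (Finset K) := .of atTop
  have hmem (x : K) : ∀ᶠ B : Finset K in l, x ∈ B :=
    Ultrafilter.of_le atTop ((eventually_ge_atTop {x}).mono fun _ => Finset.singleton_subset_iff.1)
  obtain ⟨g, hg⟩ := l.exists_ringHom_eventually_eq F
    (fun x => ⟨(minpoly ℚ x).rootSet K, rootSet_finite _ _, (hmem x).mono fun B hB =>
      mem_rootSet.2 ⟨minpoly.ne_zero (halg x).isIntegral, hroot B x hB⟩⟩)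
    ((hmem 1).mono fun B h => (hFB B).1 h)
    (fun x y => ((hmem x).and ((hmem y).and (hmem (x + y)))).mono
      fun B ⟨hx, hy, hxy⟩ => (hFB B).2.1 x y hx hy hxy)
    (fun x y => ((hmem x).and ((hmem y).and (hmem (x * y)))).mono
      fun B ⟨hx, hy, hxy⟩ => (hFB B).2.2 x y hx hy hxy)
  obtain ⟨B, hB⟩ := (hg r).exists
  exact ⟨g, hB ▸ hFr B⟩

/-- If `K` is a field of characteristic zero in which every element is algebraic over `ℚ`,
then `K̃` is the set of elements fixed by every field automorphism of `K`. -/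
theorem arithFixed_eq_fixed_by_automorphisms (K : Type*) [Field K] [CharZero K]
    (halg : ∀ x : K, IsAlgebraic ℚ x) :
    {r : K | ArithFixed r} = ⋂ σ : K ≃+* K, {x : K | σ x = x} := by
  have : Algebra.IsAlgebraic ℚ K := ⟨halg⟩
  ext r
  simp only [Set.mem_ofPred_eq, Set.mem_iInter]
  refine ⟨fun hr σ => hr.map_eq σ.toRingHom, fun hfix => by_contra fun hr => ?_⟩
  obtain ⟨g, hg⟩ := exists_ringHom_apply_ne_of_not_arithFixed halg hr
  exact hg (hfix (.ofBijective g (Algebra.IsAlgebraic.algHom_bijective g.toRatAlgHom)))
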